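/- There exist universal constants C₁, C₂ > 0 such that if n²p ≥ C₁ μ n log n, then with probability at least 1 − n^{−10} (over the sampling), for all l ∈ {1,…,n} the spectral norm satisfies ‖(1/p)·P_Ω(M*) − P_Ω^{(l)}(M*)‖ ≤ C₂ λ* √(μ/(np)). -/

import Mathlib

/-!
On the event that every row sum `∑ⱼ u_j² δ_lj` is at most `4p`, the difference matrix is
supported on row and column `l`, so its Frobenius norm, which bounds the spectral norm, is at
most `√10 λ √(μ/(np))`. Each row sum concentrates by a moment bound: the `r`-th elementary
symmetric function `e_r` of the summands has mean `p^r e_r(w) ≤ p^r / r!`, while on the bad event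
`r! e_r ≥ (3p)^r` as soon as `r max_j w_j ≤ p`. Taking `r ≈ 11 log n` (allowed when
`np ≳ μ log n`) gives probability `3^{-r} ≤ n^{-11}` per row, and a union bound over the
`n` rows gives `n^{-10}`.
-/

open MeasureTheory ProbabilityTheory

noncomputable section

/-- Euclidean (ℓ²) norm of a vector. -/
def l2 {n : ℕ} (x : Fin n → ℝ) : ℝ := Real.sqrt (∑ i, x i ^ 2)

/-- Sup (ℓ∞) norm of a vector. -/
def linf {n : ℕ} (x : Fin n → ℝ) : ℝ := ⨆ i, |x i|

/-- Spectral norm of a matrix. -/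
def specNorm {n : ℕ} (A : Matrix (Fin n) (Fin n) ℝ) : ℝ :=
  sSup {c : ℝ | ∃ x : Fin n → ℝ, l2 x ≤ 1 ∧ c = l2 (A.mulVec x)}

/-- Maximum absolute value of the entries of a matrix. -/
def matLinf {n : ℕ} (A : Matrix (Fin n) (Fin n) ℝ) : ℝ :=
  ⨆ q : Fin n × Fin n, |A q.1 q.2|

open Finset
open scoped ENNReal Nat

section ElementarySymmetric

variable {ι R : Type*} [Fintype ι]

def esymmSum [CommSemiring R] (v : ι → R) (r : ℕ) : R :=
  ∑ T ∈ powersetCard r univ, ∏ j ∈ T, v j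

/-- Each `(r+1)`-set arises from `r+1` pairs `(T, j)` with `j ∉ T`, `T ∪ {j}` the set. -/
theorem succ_mul_esymmSum_succ [CommRing R] (v : ι → R) (r : ℕ) :
    ((r : R) + 1) * esymmSum v (r + 1) =
      ∑ T ∈ powersetCard r univ, ((∑ j, v j) - ∑ j ∈ T, v j) * ∏ j ∈ T, v j := by
  classical
  have lhs : ((r : R) + 1) * esymmSum v (r + 1) =
      ∑ T ∈ powersetCard (r + 1) univ, ∑ j ∈ T, ∏ k ∈ T, v k := by
    rw [esymmSum, mul_sum]
    refine sum_congr rfl fun T hT => ?_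
    rw [sum_const, (mem_powersetCard_univ.mp hT), nsmul_eq_mul]
    push_cast
    ring
  have rhs : ∀ T : Finset ι, ((∑ j, v j) - ∑ j ∈ T, v j) * ∏ j ∈ T, v j =
      ∑ j ∈ univ \ T, ∏ k ∈ insert j T, v k := fun T => by
    rw [← sum_sdiff_eq_sub (subset_univ T), sum_mul]
    exact sum_congr rfl fun j hj => (prod_insert (mem_sdiff.mp hj).2).symm
  rw [lhs, sum_congr rfl fun T _ => rhs T, sum_sigma', sum_sigma']
  refine sum_nbij' (fun a => ⟨a.1.erase a.2, a.2⟩) (fun a => ⟨insert a.2 a.1, a.2⟩)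
    ?_ ?_ ?_ ?_ ?_
  · rintro ⟨T, j⟩ h
    simp only [mem_sigma, mem_powersetCard_univ] at h ⊢
    refine ⟨?_, ?_⟩
    · rw [card_erase_of_mem h.2, h.1]; simp
    · simp [mem_sdiff]
  · rintro ⟨T, j⟩ h
    simp only [mem_sigma, mem_powersetCard_univ, mem_sdiff] at h ⊢
    exact ⟨by rw [card_insert_of_notMem h.2.2, h.1], mem_insert_self _ _⟩
  · rintro ⟨T, j⟩ h
    simp [insert_erase (mem_sigma.mp h).2]
  · rintro ⟨T, j⟩ h
    simp [erase_insert (mem_sdiff.mp (mem_sigma.mp h).2).2]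
  · rintro ⟨T, j⟩ h
    simp [insert_erase (mem_sigma.mp h).2]

variable [CommRing R] [LinearOrder R] [IsStrictOrderedRing R]

theorem factorial_mul_esymmSum_le_sum_pow {v : ι → R} (hv : ∀ j, 0 ≤ v j) (r : ℕ) :
    (r ! : R) * esymmSum v r ≤ (∑ j, v j) ^ r := by
  induction r with
  | zero => simp [esymmSum]
  | succ r ih =>
    have hstep : ((r : R) + 1) * esymmSum v (r + 1) ≤ (∑ j, v j) * esymmSum v r := by
      rw [succ_mul_esymmSum_succ, esymmSum, mul_sum]
      refine sum_le_sum fun T _ => mul_le_mul_of_nonneg_right ?_ (prod_nonneg fun j _ => hv j)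
      linarith [sum_nonneg fun j (_ : j ∈ T) => hv j]
    have hS : 0 ≤ ∑ j, v j := sum_nonneg fun j _ => hv j
    calc ((r + 1)! : R) * esymmSum v (r + 1)
        = (r ! : R) * (((r : R) + 1) * esymmSum v (r + 1)) := by
          push_cast [Nat.factorial_succ]; ring
      _ ≤ (r ! : R) * ((∑ j, v j) * esymmSum v r) := by gcongr
      _ = (∑ j, v j) * ((r ! : R) * esymmSum v r) := by ring
      _ ≤ (∑ j, v j) * (∑ j, v j) ^ r := by gcongr
      _ = (∑ j, v j) ^ (r + 1) := by ring

theorem sub_pow_le_factorial_mul_esymmSum {v : ι → R} {b : R} (hb : 0 ≤ b)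
    (hv : ∀ j, 0 ≤ v j) (hvb : ∀ j, v j ≤ b) (r : ℕ) (hr : r * b ≤ ∑ j, v j) :
    ((∑ j, v j) - r * b) ^ r ≤ (r ! : R) * esymmSum v r := by
  induction r with
  | zero => simp [esymmSum]
  | succ r ih =>
    push_cast at hr
    have hrb : (r : R) * b ≤ ∑ j, v j := by linarith
    have hstep : ((∑ j, v j) - r * b) * esymmSum v r ≤ ((r : R) + 1) * esymmSum v (r + 1) := by
      rw [succ_mul_esymmSum_succ, esymmSum, mul_sum]
      refine sum_le_sum fun T hT => mul_le_mul_of_nonneg_right ?_ (prod_nonneg fun j _ => hv j)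
      have hT : ∑ j ∈ T, v j ≤ r * b := by
        calc ∑ j ∈ T, v j ≤ ∑ _j ∈ T, b := sum_le_sum fun j _ => hvb j
          _ = r * b := by rw [sum_const, mem_powersetCard_univ.mp hT, nsmul_eq_mul]
      linarith
    push_cast
    calc ((∑ j, v j) - ((r : R) + 1) * b) ^ (r + 1)
        ≤ ((∑ j, v j) - r * b) ^ (r + 1) := by gcongr; linarith
      _ = ((∑ j, v j) - r * b) * ((∑ j, v j) - r * b) ^ r := by ring
      _ ≤ ((∑ j, v j) - r * b) * ((r ! : R) * esymmSum v r) :=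
          mul_le_mul_of_nonneg_left (ih hrb) (by linarith)
      _ = (r ! : R) * (((∑ j, v j) - r * b) * esymmSum v r) := by ring
      _ ≤ (r ! : R) * (((r : R) + 1) * esymmSum v (r + 1)) := by gcongr
      _ = ((r + 1)! : R) * esymmSum v (r + 1) := by
          push_cast [Nat.factorial_succ]; ring

end ElementarySymmetric

theorem sq_le_linf_sq {n : ℕ} (x : Fin n → ℝ) (j : Fin n) : x j ^ 2 ≤ linf x ^ 2 := by
  rw [← sq_abs]
  exact pow_le_pow_left₀ (abs_nonneg _)
    (le_ciSup (f := fun i => |x i|) (Finite.bddAbove_range _) j) 2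

theorem linf_pos_of_l2_eq_one {n : ℕ} {x : Fin n → ℝ} (hx : l2 x = 1) : 0 < linf x := by
  have hzero : linf x = 0 → ∀ j, x j ^ 2 = 0 := fun h j =>
    le_antisymm ((sq_le_linf_sq x j).trans (by simp [h])) (sq_nonneg _)
  refine (Real.iSup_nonneg fun i => abs_nonneg (x i)).lt_of_ne' fun h => ?_
  simp [l2, hzero h] at hx

theorem l2_mulVec_le_sqrt_sum_sq {n : ℕ} (A : Matrix (Fin n) (Fin n) ℝ) {x : Fin n → ℝ}
    (hx : l2 x ≤ 1) : l2 (A.mulVec x) ≤ Real.sqrt (∑ i, ∑ j, A i j ^ 2) := by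
  have hx2 : ∑ j, x j ^ 2 ≤ 1 := Real.sqrt_le_one.mp hx
  refine Real.sqrt_le_sqrt (sum_le_sum fun i _ => ?_)
  calc (∑ j, A i j * x j) ^ 2 ≤ (∑ j, A i j ^ 2) * ∑ j, x j ^ 2 :=
        sum_mul_sq_le_sq_mul_sq _ _ _
    _ ≤ ∑ j, A i j ^ 2 := mul_le_of_le_one_right (sum_nonneg fun j _ => sq_nonneg _) hx2

theorem specNorm_le_of_sum_sq_le {n : ℕ} (A : Matrix (Fin n) (Fin n) ℝ) {B : ℝ} (hB : 0 ≤ B)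
    (h : ∑ i, ∑ j, A i j ^ 2 ≤ B ^ 2) : specNorm A ≤ B := by
  refine Real.sSup_le ?_ hB
  rintro c ⟨x, hx, rfl⟩
  calc l2 (A.mulVec x) ≤ Real.sqrt (∑ i, ∑ j, A i j ^ 2) := l2_mulVec_le_sqrt_sum_sq A hx
    _ ≤ Real.sqrt (B ^ 2) := Real.sqrt_le_sqrt h
    _ = B := Real.sqrt_sq hB

theorem sum_sq_le_of_eq_zero_off_cross {ι : Type*} [Fintype ι] [DecidableEq ι]
    (A : Matrix ι ι ℝ) (l : ι) (hA : ∀ i j, i ≠ l → j ≠ l → A i j = 0) :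
    ∑ i, ∑ j, A i j ^ 2 ≤ ∑ j, A l j ^ 2 + ∑ i, A i l ^ 2 := by
  have hcross : ∀ i j,
      A i j ^ 2 ≤ (if i = l then A i j ^ 2 else 0) + if j = l then A i j ^ 2 else 0 := by
    intro i j
    by_cases hi : i = l <;> by_cases hj : j = l <;> simp [hi, hj, hA i j, sq_nonneg]
  calc ∑ i, ∑ j, A i j ^ 2
      ≤ ∑ i, ∑ j, ((if i = l then A i j ^ 2 else 0) + if j = l then A i j ^ 2 else 0) :=
        sum_le_sum fun i _ => sum_le_sum fun j _ => hcross i j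
    _ = ∑ j, A l j ^ 2 + ∑ i, A i l ^ 2 := by
        simp only [sum_add_distrib, sum_ite_eq', mem_univ, if_true]
        rw [sum_comm (f := fun i j => if i = l then A i j ^ 2 else 0)]
        simp [sum_ite_eq']

/-- `(1/p) P_Ω(M) - P_Ω^{(l)}(M)`, with `e` the indicator matrix of `Ω`. -/
def leaveOneOutDiff {n : ℕ} (p : ℝ) (e M : Matrix (Fin n) (Fin n) ℝ) (l : Fin n) :
    Matrix (Fin n) (Fin n) ℝ :=
  Matrix.of fun i j =>
    (1 / p) * e i j * M i j - (if i = l ∨ j = l then M i j else (1 / p) * e i j * M i j)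

section LeaveOneOut

variable {n : ℕ} {p : ℝ} {e M : Matrix (Fin n) (Fin n) ℝ} {l : Fin n}

theorem leaveOneOutDiff_apply_row (j : Fin n) :
    leaveOneOutDiff p e M l l j = ((1 / p) * e l j - 1) * M l j := by
  simp only [leaveOneOutDiff, Matrix.of_apply, true_or, if_true]; ring

theorem leaveOneOutDiff_apply_col (i : Fin n) :
    leaveOneOutDiff p e M l i l = ((1 / p) * e i l - 1) * M i l := by
  simp only [leaveOneOutDiff, Matrix.of_apply, or_true, if_true]; ring

theorem leaveOneOutDiff_apply_of_ne {i j : Fin n} (hi : i ≠ l) (hj : j ≠ l) :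
    leaveOneOutDiff p e M l i j = 0 := by
  simp [leaveOneOutDiff, hi, hj]

theorem sum_sq_leaveOneOutDiff_row_le {lam b : ℝ} {u : Fin n → ℝ} (hp : 0 < p) (hp1 : p ≤ 1)
    (he : ∀ j, e l j = 0 ∨ e l j = 1) (hu : ∑ j, u j ^ 2 ≤ 1) (hub : ∀ j, u j ^ 2 ≤ b)
    (hrow : ∑ j, u j ^ 2 * e l j ≤ 4 * p) :
    ∑ j, leaveOneOutDiff p e (Matrix.of fun i j => lam * u i * u j) l l j ^ 2
      ≤ 5 * lam ^ 2 * b / p := by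
  have hentry : ∀ j, ((1 / p) * e l j - 1) ^ 2 ≤ (1 / p) ^ 2 * e l j + 1 := fun j => by
    rcases he j with h | h <;> rw [h]
    · norm_num
    · nlinarith [one_div_pos.mpr hp]
  have hb : 0 ≤ b := (sq_nonneg _).trans (hub l)
  calc ∑ j, leaveOneOutDiff p e (Matrix.of fun i j => lam * u i * u j) l l j ^ 2
      = lam ^ 2 * u l ^ 2 * ∑ j, ((1 / p) * e l j - 1) ^ 2 * u j ^ 2 := by
        simp only [leaveOneOutDiff_apply_row, Matrix.of_apply, mul_sum]
        exact sum_congr rfl fun j _ => by ring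
    _ ≤ lam ^ 2 * u l ^ 2 * ∑ j, ((1 / p) ^ 2 * (u j ^ 2 * e l j) + u j ^ 2) := by
        gcongr with j
        nlinarith [hentry j, sq_nonneg (u j)]
    _ = lam ^ 2 * u l ^ 2 * ((1 / p) ^ 2 * ∑ j, u j ^ 2 * e l j + ∑ j, u j ^ 2) := by
        rw [sum_add_distrib, mul_sum]
    _ ≤ lam ^ 2 * b * ((1 / p) ^ 2 * (4 * p) + 1) := by
        have : 0 ≤ ∑ j, u j ^ 2 * e l j :=
          sum_nonneg fun j _ => mul_nonneg (sq_nonneg _) (by rcases he j with h | h <;> simp [h])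
        gcongr
        exact hub l
    _ ≤ 5 * lam ^ 2 * b / p := by
        have h1 : 1 ≤ 1 / p := one_le_one_div hp hp1
        rw [show (1 / p) ^ 2 * (4 * p) = 4 / p by field_simp, show 5 * lam ^ 2 * b / p =
          lam ^ 2 * b * (4 / p + 1 / p) by ring]
        gcongr

theorem specNorm_leaveOneOutDiff_le {lam b : ℝ} {u : Fin n → ℝ} (hp : 0 < p) (hp1 : p ≤ 1)
    (hlam : 0 ≤ lam) (he : ∀ i j, e i j = 0 ∨ e i j = 1) (hesymm : ∀ i j, e j i = e i j)
    (hu : ∑ j, u j ^ 2 ≤ 1) (hub : ∀ j, u j ^ 2 ≤ b) (hrow : ∑ j, u j ^ 2 * e l j ≤ 4 * p) :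
    specNorm (leaveOneOutDiff p e (Matrix.of fun i j => lam * u i * u j) l)
      ≤ 4 * lam * Real.sqrt (b / p) := by
  set D := leaveOneOutDiff p e (Matrix.of fun i j => lam * u i * u j) l
  have hb : 0 ≤ b := (sq_nonneg _).trans (hub l)
  have hcol : ∑ i, D i l ^ 2 = ∑ j, D l j ^ 2 := sum_congr rfl fun i _ => by
    simp only [D, leaveOneOutDiff_apply_row, leaveOneOutDiff_apply_col, Matrix.of_apply,
      hesymm l i]
    ring
  have hrow' := sum_sq_leaveOneOutDiff_row_le (lam := lam) hp hp1 (he l) hu hub hrow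
  refine specNorm_le_of_sum_sq_le D (by positivity) ?_
  calc ∑ i, ∑ j, D i j ^ 2 ≤ ∑ j, D l j ^ 2 + ∑ i, D i l ^ 2 :=
        sum_sq_le_of_eq_zero_off_cross D l fun i j => leaveOneOutDiff_apply_of_ne
    _ ≤ 2 * (5 * lam ^ 2 * b / p) := by linarith
    _ ≤ (4 * lam * Real.sqrt (b / p)) ^ 2 := by
        rw [mul_pow, Real.sq_sqrt (by positivity)]
        have : 0 ≤ lam ^ 2 * b / p := by positivity
        linarith [show 2 * (5 * lam ^ 2 * b / p) = 10 * (lam ^ 2 * b / p) by ring,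
          show (4 * lam) ^ 2 * (b / p) = 16 * (lam ^ 2 * b / p) by ring]

end LeaveOneOut

theorem pow_le_three_pow_of_mul_log_le {x : ℝ} (hx : 0 < x) {k r : ℕ}
    (hr : k * Real.log x ≤ r) : x ^ k ≤ 3 ^ r :=
  calc x ^ k = Real.exp (k * Real.log x) := by rw [Real.exp_nat_mul, Real.exp_log hx]
    _ ≤ Real.exp r := Real.exp_le_exp.mpr hr
    _ = Real.exp 1 ^ r := by rw [← Real.exp_nat_mul, mul_one]
    _ ≤ 3 ^ r := pow_le_pow_left₀ (Real.exp_pos 1).le (by linarith [Real.exp_one_lt_d9]) _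

section Sampling

variable {Ω : Type*} [MeasurableSpace Ω] {P : Measure Ω}

theorem iIndepFun_row_of_symm {ι : Type*} [LinearOrder ι] {δ : Ω → ι → ι → ℝ}
    (hsymm : ∀ ω i j, δ ω j i = δ ω i j)
    (hind : iIndepFun (fun (q : {q : ι × ι // q.1 ≤ q.2}) (ω : Ω) => δ ω q.1.1 q.1.2) P)
    (l : ι) : iIndepFun (fun j ω => δ ω l j) P := by
  let g : ι → {q : ι × ι // q.1 ≤ q.2} := fun j =>
    if h : l ≤ j then ⟨(l, j), h⟩ else ⟨(j, l), le_of_not_ge h⟩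
  have hg : ∀ j ω, δ ω (g j).1.1 (g j).1.2 = δ ω l j := fun j ω => by
    by_cases h : l ≤ j <;> simp [g, h, hsymm ω j l]
  let other : {q : ι × ι // q.1 ≤ q.2} → ι := fun q => if q.1.1 = l then q.1.2 else q.1.1
  have hleft : Function.LeftInverse other g := fun j => by
    by_cases h : l ≤ j
    · simp [other, g, h]
    · simp [other, g, h, (lt_of_not_ge h).ne]
  simpa only [hg] using hind.precomp hleft.injective

theorem measure_iInter_eq_one_eq_pow {ι : Type*} {X : ι → Ω → ℝ} (hind : iIndepFun X P)
    {p : ℝ} (hXp : ∀ i, P {ω | X i ω = 1} = ENNReal.ofReal p) (T : Finset ι) :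
    P (⋂ i ∈ T, {ω | X i ω = 1}) = ENNReal.ofReal p ^ T.card := by
  have h := hind.measure_inter_preimage_eq_mul T (sets := fun _ => {1})
    fun _ _ => measurableSet_singleton 1
  simpa [Set.preimage, hXp] using h

variable {ι : Type*} [Fintype ι]

/-- A measurable majorant of `ω ↦ e_r(w · X ω)` for `0/1`-valued `X`; `toMeasurable` makes it
measurable without any measurability of the `X i`. -/
def esymmMajorant (P : Measure Ω) (X : ι → Ω → ℝ) (w : ι → ℝ) (r : ℕ) (ω : Ω) : ℝ≥0∞ :=
  ∑ T ∈ powersetCard r univ, (toMeasurable P (⋂ i ∈ T, {ω | X i ω = 1})).indicator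
    (fun _ => ENNReal.ofReal (∏ i ∈ T, w i)) ω

theorem measurable_esymmMajorant (X : ι → Ω → ℝ) (w : ι → ℝ) (r : ℕ) :
    Measurable (esymmMajorant P X w r) :=
  Finset.measurable_sum _ fun _ _ => measurable_const.indicator (measurableSet_toMeasurable _ _)

theorem lintegral_esymmMajorant_le {X : ι → Ω → ℝ} (hind : iIndepFun X P) {p : ℝ}
    (hp : 0 ≤ p) (hXp : ∀ i, P {ω | X i ω = 1} = ENNReal.ofReal p) {w : ι → ℝ}
    (hw : ∀ i, 0 ≤ w i) (r : ℕ) :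
    ∫⁻ ω, esymmMajorant P X w r ω ∂P ≤ ENNReal.ofReal ((p * ∑ i, w i) ^ r / r !) := by
  unfold esymmMajorant
  rw [lintegral_finsetSum _ fun _ _ =>
    measurable_const.indicator (measurableSet_toMeasurable _ _)]
  simp_rw [lintegral_indicator_const (measurableSet_toMeasurable _ _), measure_toMeasurable,
    measure_iInter_eq_one_eq_pow hind hXp, ← ENNReal.ofReal_pow hp,
    ← ENNReal.ofReal_mul (prod_nonneg fun i _ => hw i)]
  rw [← ENNReal.ofReal_sum_of_nonneg fun T _ =>
    mul_nonneg (prod_nonneg fun i _ => hw i) (pow_nonneg hp _)]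
  refine ENNReal.ofReal_le_ofReal ?_
  calc ∑ T ∈ powersetCard r univ, (∏ i ∈ T, w i) * p ^ T.card = p ^ r * esymmSum w r := by
        rw [esymmSum, mul_sum]
        exact sum_congr rfl fun T hT => by rw [(mem_powersetCard_univ.mp hT), mul_comm]
    _ ≤ p ^ r * ((∑ i, w i) ^ r / r !) := by
        gcongr
        rw [le_div_iff₀ (by positivity), mul_comm]
        exact factorial_mul_esymmSum_le_sum_pow hw r
    _ = (p * ∑ i, w i) ^ r / r ! := by ring

theorem ofReal_esymmSum_le_esymmMajorant {X : ι → Ω → ℝ}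
    (hX : ∀ i ω, X i ω = 0 ∨ X i ω = 1) {w : ι → ℝ} (hw : ∀ i, 0 ≤ w i) (r : ℕ) (ω : Ω) :
    ENNReal.ofReal (esymmSum (fun i => w i * X i ω) r) ≤ esymmMajorant P X w r ω := by
  have hX0 : ∀ i, 0 ≤ X i ω := fun i => by rcases hX i ω with h | h <;> simp [h]
  rw [esymmSum, esymmMajorant, ENNReal.ofReal_sum_of_nonneg fun T _ =>
    prod_nonneg fun i _ => mul_nonneg (hw i) (hX0 i)]
  refine sum_le_sum fun T _ => ?_
  by_cases hT : ∀ i ∈ T, X i ω = 1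
  · have hω : ω ∈ toMeasurable P (⋂ i ∈ T, {ω | X i ω = 1}) :=
      subset_toMeasurable _ _ (Set.mem_iInter₂.mpr hT)
    rw [Set.indicator_of_mem hω, prod_congr rfl fun i hi => by rw [hT i hi, mul_one]]
  · obtain ⟨i, hi, hXi⟩ := not_forall₂.mp hT
    rw [prod_eq_zero hi (by rcases hX i ω with h | h <;> simp_all)]
    simp

/-- Markov's inequality applied to `e_r` of the summands, which is at least `(s - r b) ^ r / r!`
on the event. -/
theorem measure_le_sum_mul_le_of_iIndepFun {X : ι → Ω → ℝ}
    (hX : ∀ i ω, X i ω = 0 ∨ X i ω = 1) (hind : iIndepFun X P) {p : ℝ} (hp : 0 ≤ p)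
    (hXp : ∀ i, P {ω | X i ω = 1} = ENNReal.ofReal p) {w : ι → ℝ} {b : ℝ} (hb : 0 ≤ b)
    (hw : ∀ i, 0 ≤ w i) (hwb : ∀ i, w i ≤ b) (r : ℕ) {s : ℝ} (hs : r * b < s) :
    P {ω | s ≤ ∑ i, w i * X i ω}
      ≤ ENNReal.ofReal ((p * ∑ i, w i) ^ r / (s - r * b) ^ r) := by
  have hc : 0 < (s - r * b) ^ r / r ! := by have := sub_pos.mpr hs; positivity
  have hevent : {ω | s ≤ ∑ i, w i * X i ω}
      ⊆ {ω | ENNReal.ofReal ((s - r * b) ^ r / r !) ≤ esymmMajorant P X w r ω} :=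
    fun ω (hω : s ≤ _) => by
      have hXw : ∀ i, 0 ≤ w i * X i ω ∧ w i * X i ω ≤ b := fun i => by
        rcases hX i ω with h | h <;> simp [h, hb, hw i, hwb i]
      have hlow := sub_pow_le_factorial_mul_esymmSum (v := fun i => w i * X i ω) hb
        (fun i => (hXw i).1) (fun i => (hXw i).2) r (by linarith)
      refine le_trans (ENNReal.ofReal_le_ofReal ?_) (ofReal_esymmSum_le_esymmMajorant hX hw r ω)
      rw [div_le_iff₀' (by positivity)]
      exact le_trans (by gcongr) hlow
  calc P {ω | s ≤ ∑ i, w i * X i ω}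
      ≤ P {ω | ENNReal.ofReal ((s - r * b) ^ r / r !) ≤ esymmMajorant P X w r ω} :=
        measure_mono hevent
    _ ≤ (∫⁻ ω, esymmMajorant P X w r ω ∂P) / ENNReal.ofReal ((s - r * b) ^ r / r !) :=
        meas_ge_le_lintegral_div (measurable_esymmMajorant X w r).aemeasurable
          (ENNReal.ofReal_pos.mpr hc).ne' ENNReal.ofReal_ne_top
    _ ≤ ENNReal.ofReal ((p * ∑ i, w i) ^ r / r !) / ENNReal.ofReal ((s - r * b) ^ r / r !) := by
        gcongr
        exact lintegral_esymmMajorant_le hind hp hXp hw r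
    _ = ENNReal.ofReal ((p * ∑ i, w i) ^ r / (s - r * b) ^ r) := by
        rw [← ENNReal.ofReal_div_of_pos hc]
        congr 1
        field_simp

theorem measure_exists_row_sum_gt_le {n : ℕ} (hn : 2 ≤ n) {δ : Ω → Fin n → Fin n → ℝ}
    (h01 : ∀ ω i j, δ ω i j = 0 ∨ δ ω i j = 1) (hsymm : ∀ ω i j, δ ω j i = δ ω i j)
    {p : ℝ} (hp : 0 < p) (hδp : ∀ i j, P {ω | δ ω i j = 1} = ENNReal.ofReal p)
    (hind : iIndepFun
      (fun (q : {q : Fin n × Fin n // q.1 ≤ q.2}) (ω : Ω) => δ ω q.1.1 q.1.2) P)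
    {w : Fin n → ℝ} {b : ℝ} (hw : ∀ j, 0 ≤ w j) (hw1 : ∑ j, w j ≤ 1)
    (hwb : ∀ j, w j ≤ b) (hbp : 13 * Real.log n * b ≤ p) :
    P {ω | ∃ l, 4 * p < ∑ j, w j * δ ω l j} ≤ ENNReal.ofReal (1 / (n : ℝ) ^ 10) := by
  have hn0 : (0 : ℝ) < n := by positivity
  have hb : 0 ≤ b := (hw ⟨0, by omega⟩).trans (hwb _)
  set r := ⌈11 * Real.log n⌉₊
  have h3r : (n : ℝ) ^ 11 ≤ 3 ^ r :=
    pow_le_three_pow_of_mul_log_le hn0 (by push_cast; exact Nat.le_ceil _)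
  -- `r ≤ 11 log n + 1 ≤ 13 log n`, as `log n ≥ log 2 > 1/2`
  have hrb : r * b ≤ p := by
    have hr : (r : ℝ) < 11 * Real.log n + 1 := Nat.ceil_lt_add_one (by positivity)
    have hlog : Real.log 2 ≤ Real.log n := Real.log_le_log (by norm_num) (by exact_mod_cast hn)
    nlinarith [Real.log_two_gt_d9]
  have hrow : ∀ l,
      P {ω | 4 * p < ∑ j, w j * δ ω l j} ≤ ENNReal.ofReal (1 / (n : ℝ) ^ 11) := by
    intro l
    calc P {ω | 4 * p < ∑ j, w j * δ ω l j} ≤ P {ω | 4 * p ≤ ∑ j, w j * δ ω l j} :=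
          measure_mono fun ω (hω : 4 * p < _) => hω.le
      _ ≤ ENNReal.ofReal ((p * ∑ j, w j) ^ r / (4 * p - r * b) ^ r) :=
          measure_le_sum_mul_le_of_iIndepFun (fun j ω => h01 ω l j)
            (iIndepFun_row_of_symm hsymm hind l) hp.le (hδp l) hb hw hwb r (by linarith)
      _ ≤ ENNReal.ofReal (p ^ r / (3 * p) ^ r) := by
          gcongr
          · exact mul_nonneg hp.le (sum_nonneg fun j _ => hw j)
          · exact mul_le_of_le_one_right hp.le hw1
          · linarith
      _ ≤ ENNReal.ofReal (1 / (n : ℝ) ^ 11) := by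
          rw [mul_pow, div_mul_cancel_right₀ (pow_ne_zero _ hp.ne'), one_div]
          gcongr
  calc P {ω | ∃ l, 4 * p < ∑ j, w j * δ ω l j}
      ≤ ∑ l, P {ω | 4 * p < ∑ j, w j * δ ω l j} := by
        rw [Set.ofPred_exists]; exact measure_iUnion_fintype_le P _
    _ ≤ ∑ _l : Fin n, ENNReal.ofReal (1 / (n : ℝ) ^ 11) := sum_le_sum fun l _ => hrow l
    _ = ENNReal.ofReal (1 / (n : ℝ) ^ 10) := by
        rw [sum_const, card_univ, Fintype.card_fin, nsmul_eq_mul, ← ENNReal.ofReal_natCast,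
          ← ENNReal.ofReal_mul hn0.le]
        congr 1
        field_simp

end Sampling

/-- Lemma 9 of the paper: spectral closeness of the fully sampled matrix and its
leave-one-out version. -/
theorem leave_one_out_matrix_concentration :
    ∃ C₁ C₂ : ℝ, 0 < C₁ ∧ 0 < C₂ ∧
    ∀ (n : ℕ), 2 ≤ n →
    ∀ (p lam mu : ℝ), 0 < p → p ≤ 1 → 0 < lam →
    ∀ (ustar : Fin n → ℝ), l2 ustar = 1 → linf ustar = Real.sqrt (mu / n) →
    ∀ (Ω : Type) (_ : MeasurableSpace Ω) (P : Measure Ω), IsProbabilityMeasure P →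
    ∀ (δ : Ω → Fin n → Fin n → ℝ),
      -- Bernoulli sampling, symmetric
      (∀ ω i j, δ ω i j = 0 ∨ δ ω i j = 1) →
      (∀ ω i j, δ ω j i = δ ω i j) →
      (∀ i j : Fin n, P {ω | δ ω i j = 1} = ENNReal.ofReal p) →
      iIndepFun
        (fun (q : {q : Fin n × Fin n // q.1 ≤ q.2}) (ω : Ω) => δ ω q.1.1 q.1.2) P →
    (n : ℝ) ^ 2 * p ≥ C₁ * mu * n * Real.log n →
    P {ω | ∀ l : Fin n,
          specNorm (Matrix.of fun i j =>
              (1 / p) * δ ω i j * (lam * ustar i * ustar j)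
                - (if i = l ∨ j = l then lam * ustar i * ustar j
                    else (1 / p) * δ ω i j * (lam * ustar i * ustar j)))
            ≤ C₂ * lam * Real.sqrt (mu / (n * p))}
      ≥ ENNReal.ofReal (1 - 1 / (n : ℝ) ^ 10) := by
  refine ⟨13, 4, by norm_num, by norm_num, ?_⟩
  intro n hn p lam mu hp hp1 hlam u hu hlinf Ω _ P _ δ h01 hsymm hδp hind hsample
  have hn0 : (0 : ℝ) < n := by positivity
  have hu2 : ∑ j, u j ^ 2 = 1 := Real.sqrt_eq_one.mp hu
  have hb : 0 < mu / n := Real.sqrt_pos.mp (hlinf ▸ linf_pos_of_l2_eq_one hu)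
  have hub : ∀ j, u j ^ 2 ≤ mu / n := fun j =>
    (sq_le_linf_sq u j).trans (by rw [hlinf, Real.sq_sqrt hb.le])
  have hbp : 13 * Real.log n * (mu / n) ≤ p := by
    rw [mul_div_assoc', div_le_iff₀ hn0]
    nlinarith
  set bad := {ω | ∃ l, 4 * p < ∑ j, u j ^ 2 * δ ω l j}
  have hbad : P bad ≤ ENNReal.ofReal (1 / (n : ℝ) ^ 10) :=
    measure_exists_row_sum_gt_le hn h01 hsymm hp hδp hind (fun j => sq_nonneg _) hu2.le hub hbp
  have hgood : badᶜ ⊆ {ω | ∀ l : Fin n, specNorm (leaveOneOutDiff p (δ ω)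
      (Matrix.of fun i j => lam * u i * u j) l) ≤ 4 * lam * Real.sqrt (mu / (n * p))} :=
    fun ω hω l => by
      rw [← div_div]
      exact specNorm_leaveOneOutDiff_le hp hp1 hlam.le (h01 ω) (hsymm ω) hu2.le hub
        (not_lt.mp fun h => hω ⟨l, h⟩)
  calc ENNReal.ofReal (1 - 1 / (n : ℝ) ^ 10) = 1 - ENNReal.ofReal (1 / (n : ℝ) ^ 10) := by
        rw [ENNReal.ofReal_sub _ (by positivity), ENNReal.ofReal_one]
    _ ≤ 1 - P bad := tsub_le_tsub_left hbad 1
    _ ≤ P badᶜ :=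
        tsub_le_iff_left.mpr (measure_univ (μ := P) ▸ measure_univ_le_add_compl bad)
    _ ≤ _ := measure_mono hgood
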